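/- For every n ≥ 1 and every choice of positive parameters a, the polytope Ass_n^{III}(a) has exactly n unordered pairs of distinct parallel facets, namely, for i = 1, …, n, the pair consisting of the facet maximizing the functional with first i coordinates 1 and last n+1−i coordinates 0, and the facet maximizing its negative. -/

import Mathlib

open Finset

/-- Cyclic adjacency of vertex labels of the convex `m`-gon. -/
def adjacent (m : ℕ) (a b : Fin m) : Prop :=
  (a.val + 1) % m = b.val ∨ (b.val + 1) % m = a.val

/-- A diagonal of the labeled `m`-gon: an unordered pair of distinct,
non cyclically adjacent labels. -/
def IsDiagonal (m : ℕ) (d : Finset (Fin m)) : Prop :=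
  ∃ a b : Fin m, a ≠ b ∧ ¬ adjacent m a b ∧ d = {a, b}

/-- Two diagonals cross iff their endpoints alternate in cyclic order
(equivalently, exactly one endpoint of the second lies strictly between
the two endpoints of the first). -/
def Crosses (m : ℕ) (d e : Finset (Fin m)) : Prop :=
  ∃ p q r s : Fin m, p < q ∧ q < r ∧ r < s ∧
    ((d = {p, r} ∧ e = {q, s}) ∨ (d = {q, s} ∧ e = {p, r}))

/-- A triangulation: a maximal set of pairwise non-crossing diagonals. -/
def IsTriangulation (m : ℕ) (t : Finset (Finset (Fin m))) : Prop :=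
  (∀ d ∈ t, IsDiagonal m d) ∧
  (∀ d ∈ t, ∀ e ∈ t, ¬ Crosses m d e) ∧
  (∀ d, IsDiagonal m d → (∀ e ∈ t, ¬ Crosses m d e) → d ∈ t)

/-- The pair `{a, b}` is a polygon edge (cyclically adjacent labels) or a
diagonal belonging to `t`. -/
def edgeOrDiag (m : ℕ) (t : Finset (Finset (Fin m))) (a b : Fin m) : Prop :=
  adjacent m a b ∨ ({a, b} : Finset (Fin m)) ∈ t

/-- Area of the triangle with vertices `p`, `q`, `r` in the plane. -/
noncomputable def triArea (p q r : ℝ × ℝ) : ℝ :=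
  |(q.1 - p.1) * (r.2 - p.2) - (r.1 - p.1) * (q.2 - p.2)| / 2

open Classical in
/-- The GKZ vector of a triangulation `t`: its `i`-th coordinate is the sum of
the areas of the triangles of `t` containing the vertex `i`. -/
noncomputable def gkz (m : ℕ) (q : Fin m → ℝ × ℝ) (t : Finset (Finset (Fin m))) :
    Fin m → ℝ := fun i =>
  ∑ a : Fin m, ∑ b : Fin m, ∑ c : Fin m,
    if a < b ∧ b < c ∧ edgeOrDiag m t a b ∧ edgeOrDiag m t b c ∧ edgeOrDiag m t a c ∧
        (i = a ∨ i = b ∨ i = c)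
    then triArea (q a) (q b) (q c) else 0

/-- The points `q 0, …, q (m-1)` are in strictly convex position, labeled
counterclockwise: every triple of labels in increasing order is positively oriented. -/
def ConvexCCW (m : ℕ) (q : Fin m → ℝ × ℝ) : Prop :=
  ∀ i j k : Fin m, i < j → j < k →
    0 < ((q j).1 - (q i).1) * ((q k).2 - (q i).2) -
        ((q k).1 - (q i).1) * ((q j).2 - (q i).2)

/-- The secondary polytope of the convex polygon with vertices `q`. -/
noncomputable def secondary (m : ℕ) (q : Fin m → ℝ × ℝ) : Set (Fin m → ℝ) :=
  convexHull ℝ {v | ∃ t, IsTriangulation m t ∧ v = gkz m q t}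

def dot {k : ℕ} (w x : Fin k → ℝ) : ℝ := ∑ i, w i * x i

/-- The set of points of `P` maximizing the linear functional `⟨w, ·⟩`. -/
def maxFace {k : ℕ} (P : Set (Fin k → ℝ)) (w : Fin k → ℝ) : Set (Fin k → ℝ) :=
  {x ∈ P | ∀ y ∈ P, dot w y ≤ dot w x}

/-- A face of `P`: the set of points of `P` maximizing some linear functional. -/
def IsFaceOf {k : ℕ} (P F : Set (Fin k → ℝ)) : Prop :=
  ∃ w : Fin k → ℝ, F = maxFace P w

/-- Linear span of the difference set of `F`. -/
def spanDiff {k : ℕ} (F : Set (Fin k → ℝ)) : Submodule ℝ (Fin k → ℝ) :=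
  Submodule.span ℝ {z | ∃ u ∈ F, ∃ v ∈ F, z = u - v}

/-- Dimension of a set: the rank of the span of its difference set. -/
noncomputable def dimOf {k : ℕ} (F : Set (Fin k → ℝ)) : ℕ :=
  Module.finrank ℝ (spanDiff F)

/-- A facet: a face of dimension one less than the polytope. -/
def IsFacetOf {k : ℕ} (P F : Set (Fin k → ℝ)) : Prop :=
  IsFaceOf P F ∧ dimOf F + 1 = dimOf P

/-- Two facets are parallel if the linear spans of their difference sets coincide. -/
def ParallelFaces {k : ℕ} (F F' : Set (Fin k → ℝ)) : Prop :=
  spanDiff F = spanDiff F'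

/-- A vertex of `P`. -/
def vertexOf {k : ℕ} (P : Set (Fin k → ℝ)) (v : Fin k → ℝ) : Prop :=
  v ∈ P ∧ IsFaceOf P {v}

/-- The standard basis vector `e i` of `ℝ^k`. -/
noncomputable def eVec {k : ℕ} (i : Fin k) : Fin k → ℝ := Pi.single i 1

/-- The simple root `α i = e i − e (i+1)` of type `A n`. -/
noncomputable def simpleRoot (n : ℕ) (i : Fin n) : Fin (n+1) → ℝ :=
  eVec i.castSucc - eVec i.succ

/-- Almost positive roots of type `A n`: positive roots together with the
negatives of the simple roots. -/
def AlmostPositive (n : ℕ) (β : Fin (n+1) → ℝ) : Prop :=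
  (∃ i j : Fin (n+1), i < j ∧ β = eVec i - eVec j) ∨ (∃ i : Fin n, β = -simpleRoot n i)

/-- The `i`-th snake diagonal `δ_i = {⌈(i+1)/2⌉, n+2−⌊(i+1)/2⌋}` of the
`(n+3)`-gon (here `i : Fin n` is `0`-based). -/
def snake (n : ℕ) (i : Fin n) : Finset (Fin (n+3)) :=
  {⟨(i.val + 2) / 2, by have := i.isLt; omega⟩, ⟨n + 2 - (i.val + 1) / 2, by omega⟩}

/-- The correspondence between almost positive roots and diagonals of the
`(n+3)`-gon: `−α i` corresponds to the snake diagonal `δ i`, and the positive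
root `α i + ⋯ + α j = e i − e (j+1)` corresponds to the unique diagonal crossing
exactly the snake diagonals `δ i, …, δ j`. -/
def RootDiag (n : ℕ) (β : Fin (n+1) → ℝ) (d : Finset (Fin (n+3))) : Prop :=
  (∃ i : Fin n, β = -simpleRoot n i ∧ d = snake n i) ∨
  (∃ i j : Fin n, i ≤ j ∧ β = eVec i.castSucc - eVec j.succ ∧ IsDiagonal (n+3) d ∧
    ∀ k : Fin n, (Crosses (n+3) d (snake n k) ↔ i ≤ k ∧ k ≤ j))

/-- Two almost positive roots are compatible if their corresponding diagonals
do not cross. -/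
def Compatible (n : ℕ) (β γ : Fin (n+1) → ℝ) : Prop :=
  ∀ d e : Finset (Fin (n+3)), RootDiag n β d → RootDiag n γ e → ¬ Crosses (n+3) d e

/-- A cluster of type `A n`: a maximal set of pairwise compatible almost
positive roots. -/
def IsCluster (n : ℕ) (C : Finset (Fin (n+1) → ℝ)) : Prop :=
  (∀ β ∈ C, AlmostPositive n β) ∧
  (∀ β ∈ C, ∀ γ ∈ C, Compatible n β γ) ∧
  (∀ β, AlmostPositive n β → (∀ γ ∈ C, Compatible n β γ) → β ∈ C)

/-- The cone of nonnegative linear combinations of the elements of `C`. -/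
def coneOf (n : ℕ) (C : Finset (Fin (n+1) → ℝ)) : Set (Fin (n+1) → ℝ) :=
  {x | ∃ c : (Fin (n+1) → ℝ) → ℝ, (∀ β ∈ C, 0 ≤ c β) ∧ x = ∑ β ∈ C, c β • β}

/-- The normal cone of `P` at `v`, taken within the hyperplane
`H = {x : ∑ i, x i = 0}`. -/
def normalConeIn (n : ℕ) (P : Set (Fin (n+1) → ℝ)) (v : Fin (n+1) → ℝ) :
    Set (Fin (n+1) → ℝ) :=
  {w | (∑ i, w i = 0) ∧ ∀ x ∈ P, dot w x ≤ dot w v}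

/-- A cluster-fan polytope of type `A n`: a polytope contained in the
hyperplane `H`, of dimension `n`, whose vertex normal cones within `H` are
exactly the cones spanned by the clusters of type `A n`. -/
def IsClusterFanPolytope (n : ℕ) (P : Set (Fin (n+1) → ℝ)) : Prop :=
  (∃ V : Finset (Fin (n+1) → ℝ), P = convexHull ℝ (V : Set (Fin (n+1) → ℝ))) ∧
  (∀ x ∈ P, ∑ i, x i = 0) ∧
  dimOf P = n ∧
  {S : Set (Fin (n+1) → ℝ) | ∃ v, vertexOf P v ∧ S = normalConeIn n P v} =
    {S : Set (Fin (n+1) → ℝ) |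
      ∃ C : Finset (Fin (n+1) → ℝ), IsCluster n C ∧ S = coneOf n C}

/-- The simplex `Δ_{[i,…,j]} = conv{e i, …, e j} ⊂ ℝ^{n+1}`. -/
noncomputable def stdSimplexSeg (n : ℕ) (i j : Fin (n+1)) : Set (Fin (n+1) → ℝ) :=
  convexHull ℝ {x | ∃ k : Fin (n+1), i ≤ k ∧ k ≤ j ∧ x = eVec k}

/-- Index set of the pairs `1 ≤ i ≤ j ≤ n+1`. -/
def pairIdx (n : ℕ) : Finset (Fin (n+1) × Fin (n+1)) :=
  Finset.univ.filter (fun p => p.1 ≤ p.2)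

/-- The associahedron `Ass_n^{III}(a)`: the Minkowski sum
`∑_{i ≤ j} a_{ij} Δ_{[i,…,j]}`. -/
noncomputable def AssIII (n : ℕ) (a : Fin (n+1) × Fin (n+1) → ℝ) :
    Set (Fin (n+1) → ℝ) :=
  {x | ∃ f : Fin (n+1) × Fin (n+1) → Fin (n+1) → ℝ,
    (∀ p ∈ pairIdx n, f p ∈ stdSimplexSeg n p.1 p.2) ∧
    x = ∑ p ∈ pairIdx n, a p • f p}

/-- The functional with first `i` coordinates `1`, the rest `0`. -/
def wFun (n : ℕ) (i : ℕ) : Fin (n+1) → ℝ := fun k => if (k : ℕ) < i then 1 else 0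

/-!
The face of `∑ a_{ij} Δ_{[i,j]}` maximizing `w` is the Minkowski sum of the simplices spanned by
the maximizers of `w` on each interval `[i, j]`, so its direction is spanned by the `e_b - e_b'`
with `b, b'` jointly maximal for `w` on some interval. For a coloring of the coordinates that is
constant on such pairs, the sums of the coordinates over the colour classes are independent
linear functions constant on the face; so a facet admits no such coloring with three colours.
This forces `w` to be two-valued, with a set of maximizers `S` whose complement is an interval,
and then the direction of the facet is `{x | ∑_{S} x = ∑_{Sᶜ} x = 0}`. Two such facets are
parallel iff their sets are equal or complementary, and `S` and `Sᶜ` are both intervals exactly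
when `S` or `Sᶜ` is `{1, …, i}`.
-/
open Finset

section Faces

variable {k : ℕ}

lemma dot_eq_dotProduct (w x : Fin k → ℝ) : dot w x = w ⬝ᵥ x := rfl

lemma dot_eVec (w : Fin k → ℝ) (b : Fin k) : dot w (eVec b) = w b := by
  simp [dot_eq_dotProduct, eVec, dotProduct_single]

lemma isLinearMap_dot (w : Fin k → ℝ) : IsLinearMap ℝ (dot w) :=
  ⟨dotProduct_add w, fun c x => dotProduct_smul c w x⟩

lemma spanDiff_eq_vectorSpan (F : Set (Fin k → ℝ)) : spanDiff F = vectorSpan ℝ F := by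
  rw [spanDiff, vectorSpan_def]
  congr 1
  ext z
  simp only [Set.mem_ofPred_eq, Set.mem_vsub, vsub_eq_sub, eq_comm]

lemma spanDiff_le_ker_dot {F : Set (Fin k → ℝ)} {ψ : Fin k → ℝ}
    (h : ∀ u ∈ F, ∀ v ∈ F, dot ψ u = dot ψ v) :
    spanDiff F ≤ LinearMap.ker (IsLinearMap.mk' _ (isLinearMap_dot ψ)) := by
  rw [spanDiff, Submodule.span_le]
  rintro _ ⟨u, hu, v, hv, rfl⟩
  change dot ψ (u - v) = 0
  rw [dot_eq_dotProduct, dotProduct_sub, ← dot_eq_dotProduct, ← dot_eq_dotProduct, h u hu v hv,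
    sub_self]

lemma vectorSpan_convexHull (s : Set (Fin k → ℝ)) :
    vectorSpan ℝ (convexHull ℝ s) = vectorSpan ℝ s := by
  rw [← direction_affineSpan, affineSpan_convexHull, direction_affineSpan]

lemma maxFace_zero (P : Set (Fin k → ℝ)) : maxFace P 0 = P :=
  Set.Subset.antisymm (fun _ hx => hx.1) fun x hx => ⟨hx, fun y _ => by simp [dot]⟩

/-- A point of `convexHull s` maximizing `w` is a convex combination of points of `s`, all of
which must then maximize `w`. -/
theorem maxFace_convexHull (s : Set (Fin k → ℝ)) (w : Fin k → ℝ) :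
    maxFace (convexHull ℝ s) w = convexHull ℝ (maxFace s w) := by
  classical
  apply Set.Subset.antisymm
  · rintro x ⟨hx, hmax⟩
    obtain ⟨ι, t, μ, z, hμ0, hμ1, hz, rfl⟩ := (convexHull_eq s).subset hx
    set x := t.centerMass μ z
    have hdot : dot w x = ∑ i ∈ t, μ i * dot w (z i) := by
      simp [x, centerMass_eq_of_sum_1 _ _ hμ1, dot_eq_dotProduct, dotProduct_sum,
        dotProduct_smul]
    have hgap : ∑ i ∈ t, μ i * (dot w x - dot w (z i)) = 0 := by
      simp only [mul_sub, sum_sub_distrib, ← sum_mul, hμ1, one_mul, ← hdot, sub_self]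
    have hzmax : ∀ i ∈ t, μ i ≠ 0 → z i ∈ maxFace s w := by
      intro i hi hμi
      have hle : ∀ j ∈ t, 0 ≤ μ j * (dot w x - dot w (z j)) := fun j hj =>
        mul_nonneg (hμ0 j hj) (sub_nonneg.2 (hmax _ (subset_convexHull ℝ s (hz j hj))))
      have hzero := (sum_eq_zero_iff_of_nonneg hle).1 hgap i hi
      have hxi : dot w (z i) = dot w x := by
        rcases mul_eq_zero.1 hzero with h | h
        · exact absurd h hμi
        · linarith
      exact ⟨hz i hi, fun y hy => hxi ▸ hmax y (subset_convexHull ℝ s hy)⟩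
    rw [show x = t.centerMass μ z from rfl, ← centerMass_filter_ne_zero]
    refine centerMass_mem_convexHull _ (fun i hi => hμ0 i (mem_filter.1 hi).1) ?_
      fun i hi => hzmax i (mem_filter.1 hi).1 (mem_filter.1 hi).2
    rw [sum_filter_ne_zero, hμ1]
    exact one_pos
  · intro y hy
    obtain ⟨x₀, hx₀⟩ := convexHull_nonempty_iff.1 ⟨y, hy⟩
    have hle : convexHull ℝ s ⊆ {z | dot w z ≤ dot w x₀} :=
      convexHull_min (fun z hz => hx₀.2 z hz) (convex_halfSpace_le (isLinearMap_dot w) _)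
    have heq : convexHull ℝ (maxFace s w) ⊆ {z | dot w z = dot w x₀} :=
      convexHull_min (fun z hz => le_antisymm (hx₀.2 z hz.1) (hz.2 x₀ hx₀.1))
        (convex_hyperplane (isLinearMap_dot w) _)
    exact ⟨convexHull_mono (fun z hz => hz.1) hy, fun z hz => (heq hy).symm ▸ hle hz⟩

lemma maxFace_image_eVec (A : Set (Fin k)) (w : Fin k → ℝ) :
    maxFace (eVec '' A) w = eVec '' {b ∈ A | IsMaxOn w A b} := by
  ext x
  simp only [maxFace, Set.mem_image, Set.mem_ofPred_eq, forall_exists_index, and_imp,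
    forall_apply_eq_imp_iff₂, dot_eVec, isMaxOn_iff]
  constructor
  · rintro ⟨⟨b, hb, rfl⟩, hmax⟩
    exact ⟨b, ⟨hb, fun m hm => by simpa [dot_eVec] using hmax m hm⟩, rfl⟩
  · rintro ⟨b, ⟨hb, hmax⟩, rfl⟩
    exact ⟨⟨b, hb, rfl⟩, fun m hm => by simpa [dot_eVec] using hmax m hm⟩

end Faces

section MinkowskiSum

variable {k : ℕ} {ι : Type*} (I : Finset ι) (a : ι → ℝ) (Q : ι → Set (Fin k → ℝ))

def minkowskiSum : Set (Fin k → ℝ) :=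
  {x | ∃ f : ι → Fin k → ℝ, (∀ p ∈ I, f p ∈ Q p) ∧ x = ∑ p ∈ I, a p • f p}

variable {I a Q}

lemma dot_sum_smul (w : Fin k → ℝ) (f : ι → Fin k → ℝ) :
    dot w (∑ p ∈ I, a p • f p) = ∑ p ∈ I, a p * dot w (f p) := by
  simp [dot_eq_dotProduct, dotProduct_sum, dotProduct_smul]

lemma sum_smul_update_sub [DecidableEq ι] {p : ι} (hp : p ∈ I) (f : ι → Fin k → ℝ)
    (y : Fin k → ℝ) :
    ∑ q ∈ I, a q • Function.update f p y q - ∑ q ∈ I, a q • f q = a p • (y - f p) := by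
  rw [← sum_sub_distrib, sum_eq_single_of_mem p hp fun q _ hq => by
    simp [Function.update_of_ne hq]]
  simp [smul_sub]

lemma update_mem {f : ι → Fin k → ℝ} (hf : ∀ q ∈ I, f q ∈ Q q) [DecidableEq ι] {p : ι}
    {y : Fin k → ℝ} (hy : y ∈ Q p) : ∀ q ∈ I, Function.update f p y q ∈ Q q := by
  intro q hq
  rcases eq_or_ne q p with rfl | hqp
  · simpa using hy
  · simpa [Function.update_of_ne hqp] using hf q hq

/-- Moving a single summand inside its set shows that each summand of a maximizer must
itself be a maximizer. -/
theorem maxFace_minkowskiSum (ha : ∀ p ∈ I, 0 < a p) (w : Fin k → ℝ) :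
    maxFace (minkowskiSum I a Q) w = minkowskiSum I a fun p => maxFace (Q p) w := by
  classical
  ext x
  constructor
  · rintro ⟨⟨f, hf, rfl⟩, hmax⟩
    refine ⟨f, fun p hp => ⟨hf p hp, fun y hy => ?_⟩, rfl⟩
    have hle := hmax _ ⟨_, update_mem hf hy, rfl⟩
    have hdiff := congrArg (dot w) (sum_smul_update_sub (a := a) hp f y)
    simp only [dot_eq_dotProduct, dotProduct_sub, dotProduct_smul, smul_eq_mul] at hdiff hle ⊢
    exact sub_nonpos.1 (nonpos_of_mul_nonpos_right (by linarith) (ha p hp))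
  · rintro ⟨f, hf, rfl⟩
    refine ⟨⟨f, fun p hp => (hf p hp).1, rfl⟩, ?_⟩
    rintro _ ⟨g, hg, rfl⟩
    rw [dot_sum_smul, dot_sum_smul]
    exact sum_le_sum fun p hp =>
      mul_le_mul_of_nonneg_left ((hf p hp).2 _ (hg p hp)) (ha p hp).le

lemma minkowskiSum_nonempty (hQ : ∀ p ∈ I, (Q p).Nonempty) : (minkowskiSum I a Q).Nonempty := by
  choose! f hf using hQ
  exact ⟨_, f, hf, rfl⟩

theorem vectorSpan_minkowskiSum (ha : ∀ p ∈ I, a p ≠ 0) (hQ : ∀ p ∈ I, (Q p).Nonempty) :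
    vectorSpan ℝ (minkowskiSum I a Q) = ⨆ p ∈ I, vectorSpan ℝ (Q p) := by
  classical
  apply le_antisymm
  · rw [vectorSpan_def, Submodule.span_le]
    rintro _ ⟨_, ⟨f, hf, rfl⟩, _, ⟨g, hg, rfl⟩, rfl⟩
    simp only [vsub_eq_sub, SetLike.mem_coe, ← sum_sub_distrib]
    refine Submodule.sum_mem _ fun p hp => ?_
    rw [← smul_sub]
    exact Submodule.smul_mem _ _ (Submodule.mem_iSup_of_mem p
      (Submodule.mem_iSup_of_mem hp (vsub_mem_vectorSpan ℝ (hf p hp) (hg p hp))))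
  · refine iSup₂_le fun p hp => ?_
    choose! f hf using hQ
    rw [vectorSpan_def, Submodule.span_le]
    rintro _ ⟨y, hy, z, hz, rfl⟩
    have hmem := vsub_mem_vectorSpan ℝ (s := minkowskiSum I a Q)
      ⟨_, update_mem (update_mem hf hz) hy, rfl⟩ ⟨_, update_mem hf hz, rfl⟩
    rw [vsub_eq_sub, sum_smul_update_sub hp, Function.update_self] at hmem
    simp only [vsub_eq_sub, SetLike.mem_coe]
    rw [← inv_smul_smul₀ (ha p hp) (y - z)]
    exact Submodule.smul_mem _ _ hmem

end MinkowskiSum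

section FiberSum

variable {k : ℕ} {κ : Type*} [DecidableEq κ]

def fiberSum (c : Fin k → κ) : (Fin k → ℝ) →ₗ[ℝ] (κ → ℝ) :=
  LinearMap.pi fun j => ∑ m with c m = j, LinearMap.proj m

lemma fiberSum_apply (c : Fin k → κ) (x : Fin k → ℝ) (j : κ) :
    fiberSum c x j = ∑ m with c m = j, x m := by
  simp [fiberSum]

lemma fiberSum_single (c : Fin k → κ) (m : Fin k) (t : ℝ) :
    fiberSum c (Pi.single m t) = Pi.single (c m) t := by
  ext j
  simp [fiberSum_apply, Pi.single_apply, eq_comm]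

lemma eVec_sub_eVec_mem_ker_fiberSum_iff (c : Fin k → κ) (b b' : Fin k) :
    eVec b - eVec b' ∈ LinearMap.ker (fiberSum c) ↔ c b = c b' := by
  rw [LinearMap.mem_ker, map_sub, eVec, eVec, fiberSum_single, fiberSum_single, sub_eq_zero]
  refine ⟨fun h => ?_, fun h => by rw [h]⟩
  simpa [Pi.single_apply] using congrFun h (c b)

lemma surjective_fiberSum [Fintype κ] {c : Fin k → κ} (hc : Function.Surjective c) :
    Function.Surjective (fiberSum c) := by
  choose g hg using hc
  exact fun y =>
    ⟨∑ j, Pi.single (g j) (y j), by simp [map_sum, fiberSum_single, hg, univ_sum_single]⟩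

lemma finrank_ker_fiberSum [Fintype κ] {c : Fin k → κ} (hc : Function.Surjective c) :
    Module.finrank ℝ (LinearMap.ker (fiberSum c)) = k - Fintype.card κ := by
  have h := LinearMap.finrank_range_add_finrank_ker (fiberSum c)
  rw [LinearMap.range_eq_top.2 (surjective_fiberSum hc), finrank_top,
    Module.finrank_fintype_fun_eq_card, Module.finrank_fin_fun] at h
  omega

/-- Every vector `x` with zero fibre sums is `∑ₘ xₘ (eₘ - e_{g (c m)})` for a section `g`
of `c`. -/
lemma ker_fiberSum_le [Fintype κ] {c : Fin k → κ} {V : Submodule ℝ (Fin k → ℝ)}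
    (h : ∀ b b', c b = c b' → eVec b - eVec b' ∈ V) : LinearMap.ker (fiberSum c) ≤ V := by
  intro x hx
  rcases isEmpty_or_nonempty (Fin k) with _ | _
  · rw [Subsingleton.elim x 0]
    exact V.zero_mem
  set g := Function.invFun c
  have hg : ∀ m, c (g (c m)) = c m := fun m => Function.invFun_eq ⟨m, rfl⟩
  have hsection : ∑ m, x m • eVec (g (c m)) = 0 := by
    rw [← sum_fiberwise univ c]
    refine sum_eq_zero fun j _ => ?_
    rw [sum_congr rfl fun m hm => by rw [(mem_filter.1 hm).2], ← sum_smul, ← fiberSum_apply,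
      LinearMap.mem_ker.1 hx, Pi.zero_apply, zero_smul]
  have hx' : x = ∑ m, x m • (eVec m - eVec (g (c m))) := by
    simp only [smul_sub, sum_sub_distrib, hsection, sub_zero]
    exact pi_eq_sum_univ' x
  rw [hx']
  exact V.sum_mem fun m _ => V.smul_mem _ (h _ _ (hg m).symm)

lemma ker_fiberSum_eq_iff [Fintype κ] {κ' : Type*} [Fintype κ'] [DecidableEq κ'] (c : Fin k → κ)
    (c' : Fin k → κ') :
    LinearMap.ker (fiberSum c) = LinearMap.ker (fiberSum c') ↔
      ∀ b b', c b = c b' ↔ c' b = c' b' := by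
  simp_rw [← eVec_sub_eVec_mem_ker_fiberSum_iff]
  refine ⟨fun h b b' => by rw [h], fun h => le_antisymm ?_ ?_⟩
  · exact ker_fiberSum_le fun b b' hbb' =>
      (h b b').1 ((eVec_sub_eVec_mem_ker_fiberSum_iff _ _ _).2 hbb')
  · exact ker_fiberSum_le fun b b' hbb' =>
      (h b b').2 ((eVec_sub_eVec_mem_ker_fiberSum_iff _ _ _).2 hbb')

end FiberSum

section Intervals

variable {k : ℕ}

def argmaxIcc (w : Fin k → ℝ) (i j : Fin k) : Set (Fin k) :=
  {b ∈ Set.Icc i j | IsMaxOn w (Set.Icc i j) b}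

def JointlyMaximal (w : Fin k → ℝ) (b b' : Fin k) : Prop :=
  ∃ i j, b ∈ argmaxIcc w i j ∧ b' ∈ argmaxIcc w i j

lemma argmaxIcc_nonempty (w : Fin k → ℝ) {i j : Fin k} (h : i ≤ j) :
    (argmaxIcc w i j).Nonempty := by
  obtain ⟨b, hb, hmax⟩ :=
    Set.exists_max_image (Set.Icc i j) w (Set.toFinite _) (Set.nonempty_Icc.2 h)
  exact ⟨b, hb, isMaxOn_iff.2 hmax⟩

lemma argmaxIcc_congr {w w' : Fin k → ℝ} (h : ∀ b b', w b ≤ w b' ↔ w' b ≤ w' b')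
    (i j : Fin k) : argmaxIcc w i j = argmaxIcc w' i j := by
  ext b
  simp [argmaxIcc, isMaxOn_iff, h]

lemma JointlyMaximal.apply_eq {w : Fin k → ℝ} {b b' : Fin k} (h : JointlyMaximal w b b') :
    w b = w b' := by
  obtain ⟨i, j, ⟨hb, hbmax⟩, ⟨hb', hb'max⟩⟩ := h
  exact le_antisymm (hb'max hb) (hbmax hb')

lemma jointlyMaximal_zero (b b' : Fin k) : JointlyMaximal 0 b b' :=
  ⟨b ⊓ b', b ⊔ b', ⟨Set.left_mem_uIcc, isMaxOn_iff.2 fun _ _ => le_rfl⟩,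
    ⟨Set.right_mem_uIcc, isMaxOn_iff.2 fun _ _ => le_rfl⟩⟩

def ind (S : Finset (Fin k)) : Fin k → ℝ := fun m => if m ∈ S then 1 else 0

lemma jointlyMaximal_ind_iff {S : Finset (Fin k)} {b b' : Fin k} :
    JointlyMaximal (ind S) b b' ↔ (b ∈ S ∧ b' ∈ S) ∨ ∀ m ∈ Set.uIcc b b', m ∉ S := by
  constructor
  · rintro ⟨i, j, ⟨hb, hbmax⟩, ⟨hb', hb'max⟩⟩
    rw [isMaxOn_iff] at hbmax hb'max
    by_cases hbS : b ∈ S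
    · refine Or.inl ⟨hbS, by_contra fun hb'S => ?_⟩
      exact absurd (hb'max b hb) (by norm_num [ind, hbS, hb'S])
    · refine Or.inr fun m hm hmS => ?_
      exact absurd (hbmax m (Set.uIcc_subset_Icc hb hb' hm)) (by norm_num [ind, hbS, hmS])
  · have hmax : ∀ c ∈ Set.uIcc b b', (c ∈ S ∨ ∀ m ∈ Set.uIcc b b', m ∉ S) →
        IsMaxOn (ind S) (Set.uIcc b b') c := by
      rintro c hc (hcS | hS) <;> refine isMaxOn_iff.2 fun m hm => ?_
      · by_cases hmS : m ∈ S <;> simp [ind, hcS, hmS]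
      · simp [ind, hS m hm, hS c hc]
    rintro (⟨hb, hb'⟩ | hS)
    · exact ⟨_, _, ⟨Set.left_mem_uIcc, hmax _ Set.left_mem_uIcc (.inl hb)⟩,
        ⟨Set.right_mem_uIcc, hmax _ Set.right_mem_uIcc (.inl hb')⟩⟩
    · exact ⟨_, _, ⟨Set.left_mem_uIcc, hmax _ Set.left_mem_uIcc (.inr hS)⟩,
        ⟨Set.right_mem_uIcc, hmax _ Set.right_mem_uIcc (.inr hS)⟩⟩

def sideOf (S : Finset (Fin k)) (m : Fin k) : Bool := decide (m ∈ S)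

lemma sideOf_eq_sideOf_iff {S : Finset (Fin k)} {b b' : Fin k} :
    sideOf S b = sideOf S b' ↔ (b ∈ S ↔ b' ∈ S) := by
  simp [sideOf]

lemma sideOf_surjective {S : Finset (Fin k)} (hS : S.Nonempty) (hSc : Sᶜ.Nonempty) :
    Function.Surjective (sideOf S) := by
  obtain ⟨s, hs⟩ := hS
  obtain ⟨t, ht⟩ := hSc
  rintro (_ | _)
  · exact ⟨t, by simpa [sideOf] using ht⟩
  · exact ⟨s, by simpa [sideOf] using hs⟩

lemma sideOf_eq_of_jointlyMaximal_ind {S : Finset (Fin k)} {b b' : Fin k}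
    (h : JointlyMaximal (ind S) b b') : sideOf S b = sideOf S b' := by
  rw [sideOf_eq_sideOf_iff]
  rcases jointlyMaximal_ind_iff.1 h with ⟨hb, hb'⟩ | hS
  · exact iff_of_true hb hb'
  · exact iff_of_false (hS b Set.left_mem_uIcc) (hS b' Set.right_mem_uIcc)

lemma jointlyMaximal_ind_of_sideOf_eq {S : Finset (Fin k)}
    (hSc : (↑Sᶜ : Set (Fin k)).OrdConnected) {b b' : Fin k} (h : sideOf S b = sideOf S b') :
    JointlyMaximal (ind S) b b' := by
  rw [sideOf_eq_sideOf_iff] at h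
  rw [jointlyMaximal_ind_iff]
  by_cases hb : b ∈ S
  · exact .inl ⟨hb, h.1 hb⟩
  · refine .inr fun m hm => ?_
    simpa using hSc.uIcc_subset (by simpa using hb) (by simpa using mt h.2 hb) hm

end Intervals

section AssIII

variable {n : ℕ} {a : Fin (n+1) × Fin (n+1) → ℝ}

lemma mem_pairIdx {p : Fin (n+1) × Fin (n+1)} : p ∈ pairIdx n ↔ p.1 ≤ p.2 := by
  simp [pairIdx]

lemma stdSimplexSeg_eq (i j : Fin (n+1)) :
    stdSimplexSeg n i j = convexHull ℝ (eVec '' Set.Icc i j) := by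
  rw [stdSimplexSeg]
  congr 1
  ext x
  simp [eq_comm, and_assoc]

theorem maxFace_assIII (ha : ∀ p : Fin (n+1) × Fin (n+1), p.1 ≤ p.2 → 0 < a p)
    (w : Fin (n+1) → ℝ) :
    maxFace (AssIII n a) w =
      minkowskiSum (pairIdx n) a fun p => convexHull ℝ (eVec '' argmaxIcc w p.1 p.2) := by
  change maxFace (minkowskiSum _ _ _) w = _
  rw [maxFace_minkowskiSum fun p hp => ha p (mem_pairIdx.1 hp)]
  simp_rw [stdSimplexSeg_eq, maxFace_convexHull, maxFace_image_eVec]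
  rfl

lemma maxFace_assIII_congr (ha : ∀ p : Fin (n+1) × Fin (n+1), p.1 ≤ p.2 → 0 < a p)
    {w w' : Fin (n+1) → ℝ} (h : ∀ b b', w b ≤ w b' ↔ w' b ≤ w' b') :
    maxFace (AssIII n a) w = maxFace (AssIII n a) w' := by
  simp_rw [maxFace_assIII ha, argmaxIcc_congr h]

lemma maxFace_assIII_nonempty (ha : ∀ p : Fin (n+1) × Fin (n+1), p.1 ≤ p.2 → 0 < a p)
    (w : Fin (n+1) → ℝ) : (maxFace (AssIII n a) w).Nonempty := by
  rw [maxFace_assIII ha]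
  exact minkowskiSum_nonempty fun p hp =>
    ((argmaxIcc_nonempty w (mem_pairIdx.1 hp)).image eVec).mono (subset_convexHull ℝ _)

theorem spanDiff_maxFace_assIII (ha : ∀ p : Fin (n+1) × Fin (n+1), p.1 ≤ p.2 → 0 < a p)
    (w : Fin (n+1) → ℝ) :
    spanDiff (maxFace (AssIII n a) w) =
      Submodule.span ℝ {z | ∃ b b', JointlyMaximal w b b' ∧ z = eVec b - eVec b'} := by
  rw [spanDiff_eq_vectorSpan, maxFace_assIII ha,
    vectorSpan_minkowskiSum (fun p hp => (ha p (mem_pairIdx.1 hp)).ne') fun p hp =>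
      ((argmaxIcc_nonempty w (mem_pairIdx.1 hp)).image eVec).mono (subset_convexHull ℝ _)]
  simp_rw [vectorSpan_convexHull]
  apply le_antisymm
  · refine iSup₂_le fun p _ => ?_
    rw [vectorSpan_def]
    refine Submodule.span_mono ?_
    rintro _ ⟨_, ⟨b, hb, rfl⟩, _, ⟨b', hb', rfl⟩, rfl⟩
    exact ⟨b, b', ⟨p.1, p.2, hb, hb'⟩, rfl⟩
  · rw [Submodule.span_le]
    rintro _ ⟨b, b', ⟨i, j, hb, hb'⟩, rfl⟩
    exact Submodule.mem_iSup_of_mem (i, j) (Submodule.mem_iSup_of_mem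
      (mem_pairIdx.2 (hb.1.1.trans hb.1.2))
      (vsub_mem_vectorSpan ℝ ⟨b, hb, rfl⟩ ⟨b', hb', rfl⟩))

variable {κ : Type*} [DecidableEq κ]

lemma spanDiff_maxFace_le_ker_fiberSum
    (ha : ∀ p : Fin (n+1) × Fin (n+1), p.1 ≤ p.2 → 0 < a p) {w : Fin (n+1) → ℝ}
    {c : Fin (n+1) → κ} (hc : ∀ b b', JointlyMaximal w b b' → c b = c b') :
    spanDiff (maxFace (AssIII n a) w) ≤ LinearMap.ker (fiberSum c) := by
  rw [spanDiff_maxFace_assIII ha, Submodule.span_le]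
  rintro _ ⟨b, b', h, rfl⟩
  exact (eVec_sub_eVec_mem_ker_fiberSum_iff c b b').2 (hc b b' h)

lemma ker_fiberSum_le_spanDiff_maxFace [Fintype κ]
    (ha : ∀ p : Fin (n+1) × Fin (n+1), p.1 ≤ p.2 → 0 < a p) {w : Fin (n+1) → ℝ}
    {c : Fin (n+1) → κ} (hc : ∀ b b', c b = c b' → JointlyMaximal w b b') :
    LinearMap.ker (fiberSum c) ≤ spanDiff (maxFace (AssIII n a) w) := by
  rw [spanDiff_maxFace_assIII ha]
  exact ker_fiberSum_le fun b b' h => Submodule.subset_span ⟨b, b', hc b b' h, rfl⟩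

lemma spanDiff_assIII (ha : ∀ p : Fin (n+1) × Fin (n+1), p.1 ≤ p.2 → 0 < a p) :
    spanDiff (AssIII n a) = LinearMap.ker (fiberSum fun _ : Fin (n+1) => ()) := by
  rw [← maxFace_zero (AssIII n a)]
  exact le_antisymm (spanDiff_maxFace_le_ker_fiberSum ha fun _ _ _ => rfl)
    (ker_fiberSum_le_spanDiff_maxFace ha fun b b' _ => jointlyMaximal_zero b b')

lemma dimOf_assIII (ha : ∀ p : Fin (n+1) × Fin (n+1), p.1 ≤ p.2 → 0 < a p) :
    dimOf (AssIII n a) = n := by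
  rw [dimOf, spanDiff_assIII ha, finrank_ker_fiberSum fun _ => ⟨0, rfl⟩, Fintype.card_unit]
  rfl

lemma not_isFacetOf_of_coloring (ha : ∀ p : Fin (n+1) × Fin (n+1), p.1 ≤ p.2 → 0 < a p)
    {w : Fin (n+1) → ℝ} {c : Fin (n+1) → Fin 3} (hsurj : Function.Surjective c)
    (hc : ∀ b b', JointlyMaximal w b b' → c b = c b') :
    ¬ IsFacetOf (AssIII n a) (maxFace (AssIII n a) w) := by
  rintro ⟨-, hdim⟩
  have hle := Submodule.finrank_mono (spanDiff_maxFace_le_ker_fiberSum ha hc)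
  have h3 := Fintype.card_le_of_surjective c hsurj
  rw [finrank_ker_fiberSum hsurj] at hle
  rw [dimOf_assIII ha, dimOf] at hdim
  simp only [Fintype.card_fin] at h3 hle
  omega

lemma apply_eq_of_isFacetOf (ha : ∀ p : Fin (n+1) × Fin (n+1), p.1 ≤ p.2 → 0 < a p)
    {w : Fin (n+1) → ℝ} (hF : IsFacetOf (AssIII n a) (maxFace (AssIII n a) w))
    {x y z : Fin (n+1)} (hxy : w x ≠ w y) (hxz : w x ≠ w z) : w y = w z := by
  by_contra hyz
  let c : Fin (n+1) → Fin 3 := fun m => if w m = w x then 0 else if w m = w y then 1 else 2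
  refine not_isFacetOf_of_coloring ha (c := c) ?_ (fun b b' h => by simp only [c, h.apply_eq]) hF
  intro j
  fin_cases j
  · exact ⟨x, by simp [c]⟩
  · exact ⟨y, by simp [c, Ne.symm hxy]⟩
  · exact ⟨z, by simp [c, Ne.symm hxz, Ne.symm hyz]⟩

lemma ordConnected_compl_of_isFacetOf (ha : ∀ p : Fin (n+1) × Fin (n+1), p.1 ≤ p.2 → 0 < a p)
    {S : Finset (Fin (n+1))} (hF : IsFacetOf (AssIII n a) (maxFace (AssIII n a) (ind S))) :
    (↑Sᶜ : Set (Fin (n+1))).OrdConnected := by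
  refine ⟨fun t ht t' ht' s hs => by_contra fun hsS => ?_⟩
  simp only [coe_compl, Set.mem_compl_iff, mem_coe, not_not] at ht ht' hsS
  let c : Fin (n+1) → Fin 3 := fun m => if m ∈ S then 0 else if m < s then 1 else 2
  refine not_isFacetOf_of_coloring ha (c := c) ?_ (fun b b' h => ?_) hF
  · intro j
    fin_cases j
    · exact ⟨s, by simp [c, hsS]⟩
    · exact ⟨t, by simp [c, ht, lt_of_le_of_ne hs.1 fun h => ht (h ▸ hsS)]⟩
    · exact ⟨t', by simp [c, ht', hs.2]⟩
  · rcases jointlyMaximal_ind_iff.1 h with ⟨hb, hb'⟩ | hdisj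
    · simp [c, hb, hb']
    · have hs' : s ∉ Set.uIcc b b' := fun hsm => hdisj s hsm hsS
      simp only [c, hdisj b Set.left_mem_uIcc, hdisj b' Set.right_mem_uIcc, if_false]
      by_cases hb : b < s <;> by_cases hb' : b' < s <;> simp only [hb, hb', if_true, if_false]
      · exact absurd (Set.mem_uIcc.2 (.inl ⟨hb.le, not_lt.1 hb'⟩)) hs'
      · exact absurd (Set.mem_uIcc.2 (.inr ⟨hb'.le, not_lt.1 hb⟩)) hs'

end AssIII

section Facets

variable {n : ℕ} {a : Fin (n+1) × Fin (n+1) → ℝ}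

lemma spanDiff_maxFace_ind (ha : ∀ p : Fin (n+1) × Fin (n+1), p.1 ≤ p.2 → 0 < a p)
    {S : Finset (Fin (n+1))} (hSc : (↑Sᶜ : Set (Fin (n+1))).OrdConnected) :
    spanDiff (maxFace (AssIII n a) (ind S)) = LinearMap.ker (fiberSum (sideOf S)) :=
  le_antisymm (spanDiff_maxFace_le_ker_fiberSum ha fun _ _ => sideOf_eq_of_jointlyMaximal_ind)
    (ker_fiberSum_le_spanDiff_maxFace ha fun _ _ => jointlyMaximal_ind_of_sideOf_eq hSc)

lemma isFacetOf_maxFace_ind (ha : ∀ p : Fin (n+1) × Fin (n+1), p.1 ≤ p.2 → 0 < a p)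
    {S : Finset (Fin (n+1))} (hS : S.Nonempty) (hSc : Sᶜ.Nonempty)
    (hSc' : (↑Sᶜ : Set (Fin (n+1))).OrdConnected) :
    IsFacetOf (AssIII n a) (maxFace (AssIII n a) (ind S)) := by
  have hsurj := sideOf_surjective hS hSc
  have h2 := Fintype.card_le_of_surjective _ hsurj
  refine ⟨⟨ind S, rfl⟩, ?_⟩
  rw [dimOf, spanDiff_maxFace_ind ha hSc', finrank_ker_fiberSum hsurj, dimOf_assIII ha]
  simp only [Fintype.card_bool, Fintype.card_fin] at h2 ⊢
  omega

lemma maxFace_neg_ind (ha : ∀ p : Fin (n+1) × Fin (n+1), p.1 ≤ p.2 → 0 < a p)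
    (S : Finset (Fin (n+1))) :
    maxFace (AssIII n a) (-ind S) = maxFace (AssIII n a) (ind Sᶜ) :=
  maxFace_assIII_congr ha fun b b' => by
    by_cases hb : b ∈ S <;> by_cases hb' : b' ∈ S <;> norm_num [ind, hb, hb']

lemma maxFace_eq_maxFace_ind_of_isFacetOf
    (ha : ∀ p : Fin (n+1) × Fin (n+1), p.1 ≤ p.2 → 0 < a p) {w : Fin (n+1) → ℝ}
    (hF : IsFacetOf (AssIII n a) (maxFace (AssIII n a) w)) :
    maxFace (AssIII n a) w =
      maxFace (AssIII n a) (ind {m | ∀ m', w m' ≤ w m}) := by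
  obtain ⟨s, hs⟩ := Finite.exists_max w
  have hlow : ∀ {b}, ¬ (∀ m', w m' ≤ w b) → w s ≠ w b := fun hb hsb => hb (hsb ▸ hs)
  have hind : ∀ m, ind {m | ∀ m', w m' ≤ w m} m = if ∀ m', w m' ≤ w m then 1 else 0 :=
    fun m => by simp [ind]
  refine maxFace_assIII_congr ha fun b b' => ?_
  rw [hind, hind]
  by_cases hb : ∀ m', w m' ≤ w b <;> by_cases hb' : ∀ m', w m' ≤ w b'
  · rw [if_pos hb, if_pos hb']
    exact iff_of_true (hb' b) le_rfl
  · rw [if_pos hb, if_neg hb']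
    exact iff_of_false (fun h => hb' fun m => (hb m).trans h) (by norm_num)
  · rw [if_neg hb, if_pos hb']
    exact iff_of_true (hb' b) (by norm_num)
  · rw [if_neg hb, if_neg hb']
    exact iff_of_true (apply_eq_of_isFacetOf ha hF (hlow hb) (hlow hb')).le le_rfl

theorem exists_ind_of_isFacetOf (ha : ∀ p : Fin (n+1) × Fin (n+1), p.1 ≤ p.2 → 0 < a p)
    {F : Set (Fin (n+1) → ℝ)} (hF : IsFacetOf (AssIII n a) F) :
    ∃ S : Finset (Fin (n+1)), S.Nonempty ∧ Sᶜ.Nonempty ∧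
      (↑Sᶜ : Set (Fin (n+1))).OrdConnected ∧ F = maxFace (AssIII n a) (ind S) := by
  obtain ⟨w, rfl⟩ := hF.1
  have heq := maxFace_eq_maxFace_ind_of_isFacetOf ha hF
  set S : Finset (Fin (n+1)) := {m | ∀ m', w m' ≤ w m}
  rw [heq] at hF ⊢
  refine ⟨S, ?_, ?_, ordConnected_compl_of_isFacetOf ha hF, rfl⟩
  · obtain ⟨s, hs⟩ := Finite.exists_max w
    exact ⟨s, by simpa [S] using hs⟩
  · rw [nonempty_iff_ne_empty, Ne, compl_eq_empty_iff]
    intro hS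
    have hP : maxFace (AssIII n a) (ind S) = AssIII n a :=
      calc maxFace (AssIII n a) (ind S) = maxFace (AssIII n a) 0 :=
            maxFace_assIII_congr ha fun b b' => by simp [ind, hS]
        _ = AssIII n a := maxFace_zero _
    have := hF.2
    rw [hP] at this
    omega

lemma maxFace_ind_ne_maxFace_ind_compl (ha : ∀ p : Fin (n+1) × Fin (n+1), p.1 ≤ p.2 → 0 < a p)
    {S : Finset (Fin (n+1))} (hS : S.Nonempty) (hSc : Sᶜ.Nonempty) :
    maxFace (AssIII n a) (ind S) ≠ maxFace (AssIII n a) (ind Sᶜ) := by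
  intro heq
  obtain ⟨x, hx⟩ := maxFace_assIII_nonempty ha (ind S)
  have hx' : x ∈ maxFace (AssIII n a) (-ind S) := by rwa [maxFace_neg_ind ha, ← heq]
  have hconst : ∀ y ∈ AssIII n a, dot (ind S) y = dot (ind S) x := fun y hy => by
    have := hx'.2 y hy
    simp only [dot_eq_dotProduct, neg_dotProduct] at this ⊢
    exact le_antisymm (hx.2 y hy) (by linarith)
  obtain ⟨s, hs⟩ := hS
  obtain ⟨t, ht⟩ := hSc
  have hmem : eVec s - eVec t ∈ spanDiff (AssIII n a) := by
    rw [spanDiff_assIII ha]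
    exact (eVec_sub_eVec_mem_ker_fiberSum_iff _ s t).2 rfl
  have hzero := spanDiff_le_ker_dot (fun u hu v hv => (hconst u hu).trans (hconst v hv).symm) hmem
  rw [LinearMap.mem_ker, IsLinearMap.mk'_apply, dot_eq_dotProduct, dotProduct_sub,
    ← dot_eq_dotProduct, ← dot_eq_dotProduct, dot_eVec, dot_eVec] at hzero
  norm_num [ind, hs, (mem_compl.1 ht)] at hzero

lemma parallelFaces_maxFace_ind_compl (ha : ∀ p : Fin (n+1) × Fin (n+1), p.1 ≤ p.2 → 0 < a p)
    {S : Finset (Fin (n+1))} (hS : (↑S : Set (Fin (n+1))).OrdConnected)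
    (hSc : (↑Sᶜ : Set (Fin (n+1))).OrdConnected) :
    ParallelFaces (maxFace (AssIII n a) (ind S)) (maxFace (AssIII n a) (ind Sᶜ)) := by
  rw [ParallelFaces, spanDiff_maxFace_ind ha hSc, spanDiff_maxFace_ind ha (by simpa using hS),
    ker_fiberSum_eq_iff]
  simp only [sideOf_eq_sideOf_iff, mem_compl]
  exact fun _ _ => not_iff_not.symm

lemma eq_or_eq_compl_of_ker_fiberSum_eq {k : ℕ} {S S' : Finset (Fin k)} (hS : S.Nonempty)
    (h : LinearMap.ker (fiberSum (sideOf S)) = LinearMap.ker (fiberSum (sideOf S'))) :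
    S' = S ∨ S' = Sᶜ := by
  simp_rw [ker_fiberSum_eq_iff, sideOf_eq_sideOf_iff] at h
  obtain ⟨s, hs⟩ := hS
  by_cases hs' : s ∈ S'
  · exact .inl (ext fun m => by have := h m s; tauto)
  · exact .inr (ext fun m => by have := h m s; rw [mem_compl]; tauto)

theorem exists_compl_pair_of_parallelFaces
    (ha : ∀ p : Fin (n+1) × Fin (n+1), p.1 ≤ p.2 → 0 < a p) {F F' : Set (Fin (n+1) → ℝ)}
    (hF : IsFacetOf (AssIII n a) F) (hF' : IsFacetOf (AssIII n a) F') (hne : F ≠ F')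
    (hpar : ParallelFaces F F') :
    ∃ S : Finset (Fin (n+1)), S.Nonempty ∧ Sᶜ.Nonempty ∧ (↑S : Set (Fin (n+1))).OrdConnected ∧
      (↑Sᶜ : Set (Fin (n+1))).OrdConnected ∧
      F = maxFace (AssIII n a) (ind S) ∧ F' = maxFace (AssIII n a) (ind Sᶜ) := by
  obtain ⟨S, hS, hSc, hconn, rfl⟩ := exists_ind_of_isFacetOf ha hF
  obtain ⟨S', -, -, hconn', rfl⟩ := exists_ind_of_isFacetOf ha hF'
  have hker := hpar
  rw [ParallelFaces, spanDiff_maxFace_ind ha hconn, spanDiff_maxFace_ind ha hconn'] at hker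
  rcases eq_or_eq_compl_of_ker_fiberSum_eq hS hker with rfl | rfl
  · exact absurd rfl hne
  · exact ⟨S, hS, hSc, by simpa using hconn', hconn, rfl, rfl⟩

end Facets

section InitialSegments

variable {n : ℕ}

def initSegment (n i : ℕ) : Finset (Fin (n+1)) := {m | (m : ℕ) < i}

lemma wFun_eq_ind_initSegment (i : ℕ) : wFun n i = ind (initSegment n i) := by
  ext m
  simp [wFun, ind, initSegment]

lemma zero_mem_initSegment {i : ℕ} (hi : 1 ≤ i) : (0 : Fin (n+1)) ∈ initSegment n i := by
  simpa [initSegment, Nat.pos_iff_ne_zero, ← Nat.one_le_iff_ne_zero] using hi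

lemma initSegment_nonempty {i : ℕ} (hi : 1 ≤ i) : (initSegment n i).Nonempty :=
  ⟨0, zero_mem_initSegment hi⟩

lemma compl_initSegment_nonempty {i : ℕ} (hi : i ≤ n) : (initSegment n i)ᶜ.Nonempty :=
  ⟨Fin.last n, by simpa [initSegment] using hi⟩

lemma ordConnected_initSegment (i : ℕ) : (↑(initSegment n i) : Set (Fin (n+1))).OrdConnected :=
  ⟨fun _ _ y hy m hm => by
    simp only [initSegment, coe_filter, mem_univ, true_and, Set.mem_ofPred_eq] at hy ⊢
    exact lt_of_le_of_lt (Fin.le_def.1 hm.2) hy⟩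

lemma ordConnected_compl_initSegment (i : ℕ) :
    (↑(initSegment n i)ᶜ : Set (Fin (n+1))).OrdConnected :=
  ⟨fun x hx _ _ m hm => by
    simp only [initSegment, coe_compl, coe_filter, mem_univ, true_and, Set.mem_compl_iff,
      Set.mem_ofPred_eq, not_lt] at hx ⊢
    exact hx.trans (Fin.le_def.1 hm.1)⟩

lemma eq_of_initSegment_eq {i j : ℕ} (hi : i ≤ n) (hj : j ≤ n)
    (h : initSegment n i = initSegment n j) : i = j := by
  have hi' := Finset.ext_iff.1 h ⟨i, by omega⟩
  have hj' := Finset.ext_iff.1 h ⟨j, by omega⟩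
  simp only [initSegment, mem_filter, mem_univ, true_and] at hi' hj'
  omega

lemma exists_eq_initSegment {S : Finset (Fin (n+1))} (h0 : 0 ∈ S) (hSc : Sᶜ.Nonempty)
    (hS : (↑S : Set (Fin (n+1))).OrdConnected) : ∃ i, 1 ≤ i ∧ i ≤ n ∧ S = initSegment n i := by
  set t := Sᶜ.min' hSc
  have ht : t ∉ S := mem_compl.1 (Sᶜ.min'_mem hSc)
  have ht0 : t ≠ 0 := fun h => ht (h ▸ h0)
  refine ⟨t, Nat.one_le_iff_ne_zero.2 (Fin.val_ne_zero_iff.2 ht0), Nat.lt_succ_iff.1 t.isLt,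
    ext fun m => ?_⟩
  simp only [initSegment, mem_filter, mem_univ, true_and, ← Fin.lt_def]
  constructor
  · intro hm
    by_contra htm
    exact ht (hS.out h0 hm ⟨Fin.zero_le t, not_lt.1 htm⟩)
  · intro hmt
    by_contra hm
    exact absurd (Sᶜ.min'_le m (mem_compl.2 hm)) (not_le.2 hmt)

lemma exists_initSegment_of_ordConnected {S : Finset (Fin (n+1))} (hS : S.Nonempty)
    (hSc : Sᶜ.Nonempty)
    (hS' : (↑S : Set (Fin (n+1))).OrdConnected)
    (hSc' : (↑Sᶜ : Set (Fin (n+1))).OrdConnected) :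
    ∃ i, 1 ≤ i ∧ i ≤ n ∧ (S = initSegment n i ∨ Sᶜ = initSegment n i) := by
  by_cases h0 : 0 ∈ S
  · obtain ⟨i, h1, h2, h⟩ := exists_eq_initSegment h0 hSc hS'
    exact ⟨i, h1, h2, .inl h⟩
  · obtain ⟨i, h1, h2, h⟩ := exists_eq_initSegment (mem_compl.2 h0) (by simpa using hS) hSc'
    exact ⟨i, h1, h2, .inr h⟩

end InitialSegments

section ParallelFacets

variable {n : ℕ} {a : Fin (n+1) × Fin (n+1) → ℝ}

lemma parallel_facets_wFun (ha : ∀ p : Fin (n+1) × Fin (n+1), p.1 ≤ p.2 → 0 < a p) {i : ℕ}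
    (h1 : 1 ≤ i) (h2 : i ≤ n) :
    IsFacetOf (AssIII n a) (maxFace (AssIII n a) (wFun n i)) ∧
      IsFacetOf (AssIII n a) (maxFace (AssIII n a) (-wFun n i)) ∧
      maxFace (AssIII n a) (wFun n i) ≠ maxFace (AssIII n a) (-wFun n i) ∧
      ParallelFaces (maxFace (AssIII n a) (wFun n i)) (maxFace (AssIII n a) (-wFun n i)) := by
  rw [wFun_eq_ind_initSegment, maxFace_neg_ind ha]
  exact ⟨isFacetOf_maxFace_ind ha (initSegment_nonempty h1) (compl_initSegment_nonempty h2)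
      (ordConnected_compl_initSegment i),
    isFacetOf_maxFace_ind ha (compl_initSegment_nonempty h2)
      (by simpa using initSegment_nonempty h1)
      (by simpa using ordConnected_initSegment i),
    maxFace_ind_ne_maxFace_ind_compl ha (initSegment_nonempty h1) (compl_initSegment_nonempty h2),
    parallelFaces_maxFace_ind_compl ha (ordConnected_initSegment i)
      (ordConnected_compl_initSegment i)⟩

lemma exists_wFun_of_parallelFaces (ha : ∀ p : Fin (n+1) × Fin (n+1), p.1 ≤ p.2 → 0 < a p)
    {F F' : Set (Fin (n+1) → ℝ)} (hF : IsFacetOf (AssIII n a) F)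
    (hF' : IsFacetOf (AssIII n a) F') (hne : F ≠ F') (hpar : ParallelFaces F F') :
    ∃ i : ℕ, 1 ≤ i ∧ i ≤ n ∧ ({F, F'} : Set (Set (Fin (n+1) → ℝ))) =
      {maxFace (AssIII n a) (wFun n i), maxFace (AssIII n a) (-wFun n i)} := by
  obtain ⟨S, hS, hSc, hS', hSc', rfl, rfl⟩ :=
    exists_compl_pair_of_parallelFaces ha hF hF' hne hpar
  obtain ⟨i, h1, h2, rfl | hcut⟩ := exists_initSegment_of_ordConnected hS hSc hS' hSc'
  · exact ⟨i, h1, h2, by rw [wFun_eq_ind_initSegment, maxFace_neg_ind ha]⟩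
  · refine ⟨i, h1, h2, ?_⟩
    rw [wFun_eq_ind_initSegment, maxFace_neg_ind ha, ← hcut, compl_compl, Set.pair_comm]

lemma injOn_wFun_pair (ha : ∀ p : Fin (n+1) × Fin (n+1), p.1 ≤ p.2 → 0 < a p) :
    Set.InjOn (fun i => ({maxFace (AssIII n a) (wFun n i), maxFace (AssIII n a) (-wFun n i)} :
      Set (Set (Fin (n+1) → ℝ)))) (Set.Icc 1 n) := by
  intro i hi j hj hij
  have hmem : maxFace (AssIII n a) (wFun n i) ∈
      ({maxFace (AssIII n a) (wFun n j), maxFace (AssIII n a) (-wFun n j)} :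
        Set (Set (Fin (n+1) → ℝ))) := by
    simp only at hij
    rw [← hij]
    exact Set.mem_insert _ _
  have hpar :
      ParallelFaces (maxFace (AssIII n a) (wFun n i)) (maxFace (AssIII n a) (wFun n j)) := by
    rcases hmem with h | h
    · rw [h]
      rfl
    · rw [Set.mem_singleton_iff.1 h]
      exact (parallel_facets_wFun ha hj.1 hj.2).2.2.2.symm
  rw [ParallelFaces, wFun_eq_ind_initSegment, wFun_eq_ind_initSegment,
    spanDiff_maxFace_ind ha (ordConnected_compl_initSegment i),
    spanDiff_maxFace_ind ha (ordConnected_compl_initSegment j)] at hpar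
  rcases eq_or_eq_compl_of_ker_fiberSum_eq (initSegment_nonempty hi.1) hpar with h | h
  · exact (eq_of_initSegment_eq hj.2 hi.2 h).symm
  · have h0 := zero_mem_initSegment (n := n) hj.1
    rw [h, mem_compl] at h0
    exact absurd (zero_mem_initSegment hi.1) h0

end ParallelFacets

theorem assIII_parallel_facets_general (n : ℕ)
    (a : Fin (n+1) × Fin (n+1) → ℝ)
    (ha : ∀ p : Fin (n+1) × Fin (n+1), p.1 ≤ p.2 → 0 < a p) :
    (∀ i : ℕ, 1 ≤ i → i ≤ n →
      IsFacetOf (AssIII n a) (maxFace (AssIII n a) (wFun n i)) ∧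
      IsFacetOf (AssIII n a) (maxFace (AssIII n a) (-wFun n i)) ∧
      maxFace (AssIII n a) (wFun n i) ≠ maxFace (AssIII n a) (-wFun n i) ∧
      ParallelFaces (maxFace (AssIII n a) (wFun n i))
        (maxFace (AssIII n a) (-wFun n i))) ∧
    (∀ F F', IsFacetOf (AssIII n a) F → IsFacetOf (AssIII n a) F' → F ≠ F' →
      ParallelFaces F F' →
      ∃ i : ℕ, 1 ≤ i ∧ i ≤ n ∧
        ({F, F'} : Set (Set (Fin (n+1) → ℝ))) =
          {maxFace (AssIII n a) (wFun n i), maxFace (AssIII n a) (-wFun n i)}) ∧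
    {pr : Set (Set (Fin (n+1) → ℝ)) | ∃ F F', IsFacetOf (AssIII n a) F ∧
      IsFacetOf (AssIII n a) F' ∧ F ≠ F' ∧ ParallelFaces F F' ∧
      pr = {F, F'}}.ncard = n := by
  refine ⟨fun i => parallel_facets_wFun ha, fun F F' => exists_wFun_of_parallelFaces ha, ?_⟩
  have hpairs : {pr : Set (Set (Fin (n+1) → ℝ)) | ∃ F F', IsFacetOf (AssIII n a) F ∧
      IsFacetOf (AssIII n a) F' ∧ F ≠ F' ∧ ParallelFaces F F' ∧ pr = {F, F'}} =
      (fun i => {maxFace (AssIII n a) (wFun n i), maxFace (AssIII n a) (-wFun n i)}) ''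
        Set.Icc 1 n := by
    ext pr
    constructor
    · rintro ⟨F, F', hF, hF', hne, hpar, rfl⟩
      obtain ⟨i, h1, h2, h⟩ := exists_wFun_of_parallelFaces ha hF hF' hne hpar
      exact ⟨i, ⟨h1, h2⟩, h.symm⟩
    · rintro ⟨i, ⟨h1, h2⟩, rfl⟩
      obtain ⟨hF, hF', hne, hpar⟩ := parallel_facets_wFun ha h1 h2
      exact ⟨_, _, hF, hF', hne, hpar, rfl⟩
  rw [hpairs, (injOn_wFun_pair ha).ncard_image]
  simp

/-- `Ass_n^{III}(a)` has exactly `n` unordered pairs of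
distinct parallel facets, namely, for `i = 1, …, n`, the facet maximizing the
functional with first `i` coordinates `1` and last `n+1−i` coordinates `0`,
together with the facet maximizing its negative. -/
theorem assIII_parallel_facets (n : ℕ) (hn : 1 ≤ n)
    (a : Fin (n+1) × Fin (n+1) → ℝ)
    (ha : ∀ p : Fin (n+1) × Fin (n+1), p.1 ≤ p.2 → 0 < a p) :
    (∀ i : ℕ, 1 ≤ i → i ≤ n →
      IsFacetOf (AssIII n a) (maxFace (AssIII n a) (wFun n i)) ∧
      IsFacetOf (AssIII n a) (maxFace (AssIII n a) (-wFun n i)) ∧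
      maxFace (AssIII n a) (wFun n i) ≠ maxFace (AssIII n a) (-wFun n i) ∧
      ParallelFaces (maxFace (AssIII n a) (wFun n i))
        (maxFace (AssIII n a) (-wFun n i))) ∧
    (∀ F F', IsFacetOf (AssIII n a) F → IsFacetOf (AssIII n a) F' → F ≠ F' →
      ParallelFaces F F' →
      ∃ i : ℕ, 1 ≤ i ∧ i ≤ n ∧
        ({F, F'} : Set (Set (Fin (n+1) → ℝ))) =
          {maxFace (AssIII n a) (wFun n i), maxFace (AssIII n a) (-wFun n i)}) ∧
    {pr : Set (Set (Fin (n+1) → ℝ)) | ∃ F F', IsFacetOf (AssIII n a) F ∧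
      IsFacetOf (AssIII n a) F' ∧ F ≠ F' ∧ ParallelFaces F F' ∧
      pr = {F, F'}}.ncard = n :=
  assIII_parallel_facets_general n a ha
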